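/- arXiv:1210.4142 — 6 statements merged into one kernel-verified Lean document; each statement's English description precedes it below -/
import Mathlib

section
/- If M₁ and M₂ are two positive operator valued measures (POVMs) with countable outcome sets on a Hilbert space, T₁ and T₂ are trivial POVMs (each effect a scalar multiple of the identity, given by probability distributions p₁ and p₂), and 0 ≤ λ ≤ 1, then the POVMs λM₁ + (1−λ)T₁ and (1−λ)M₂ + λT₂ are jointly measurable; an explicit joint observable is G(j,k) = λ p₂(k) M₁(j) + (1−λ) p₁(j) M₂(k). -/
open scoped ComplexOrder
/-- A POVM with countable outcome set `J` on the Hilbert space `ℂ^n`,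
represented by matrices: each effect is positive semidefinite and they sum to the identity. -/
def IsPOVM {n : ℕ} {J : Type} [Countable J] (M : J → Matrix (Fin n) (Fin n) ℂ) : Prop :=
  (∀ j, (M j).PosSemidef) ∧ ∑' j, M j = 1

/-- A probability distribution on a countable set. -/
def IsProbDist {J : Type} [Countable J] (p : J → ℝ) : Prop :=
  (∀ j, 0 ≤ p j) ∧ ∑' j, p j = 1

/-- A trivial POVM: each effect is a scalar multiple of the identity,
given by a probability distribution. -/
def IsTrivialPOVM {n : ℕ} {J : Type} [Countable J] (T : J → Matrix (Fin n) (Fin n) ℂ) : Prop :=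
  ∃ p : J → ℝ, IsProbDist p ∧ ∀ j, T j = ((p j : ℝ) : ℂ) • 1

/-- Joint measurability: existence of a joint POVM with the two given POVMs as marginals. -/
def JointlyMeasurable {n : ℕ} {J K : Type} [Countable J] [Countable K]
    (M₁ : J → Matrix (Fin n) (Fin n) ℂ) (M₂ : K → Matrix (Fin n) (Fin n) ℂ) : Prop :=
  ∃ G : J × K → Matrix (Fin n) (Fin n) ℂ, IsPOVM G ∧
    (∀ j, ∑' k, G (j, k) = M₁ j) ∧ (∀ k, ∑' j, G (j, k) = M₂ k)

/-- The mixture `l • M + (1 - l) • T`, effectwise. -/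
def mix {n : ℕ} {J : Type} [Countable J] (l : ℝ)
    (M T : J → Matrix (Fin n) (Fin n) ℂ) : J → Matrix (Fin n) (Fin n) ℂ :=
  fun j => ((l : ℝ) : ℂ) • M j + (((1 - l : ℝ)) : ℂ) • T j

/-!
The joint observable `G(j,k) = λ p₂(k) M₁(j) + (1 - λ) p₁(j) M₂(k)` is a sum of two nonnegative
multiples of effects, hence positive. Summing over `k` uses `∑ p₂ = 1` and `∑ M₂ = I` and leaves
`λ M₁(j) + (1 - λ) p₁(j) I`, which is the first noisy observable; the other marginal is symmetric.
The double series converges absolutely because matrices form a finite-dimensional space, so its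
total is `λ I + (1 - λ) I = I`.
-/

attribute [local instance] Matrix.normedAddCommGroup Matrix.normedSpace

theorem hasSum_one_of_tsum_eq_one {ι α : Type*} [Semiring α] [TopologicalSpace α] {f : ι → α}
    (h : ∑' i, f i = 1) : HasSum f 1 := by
  have hf : Summable f := by
    nontriviality α
    by_contra hf
    exact one_ne_zero (h.symm.trans (tsum_eq_zero_of_not_summable hf))
  exact h ▸ hf.hasSum

theorem IsProbDist.hasSum {J : Type} [Countable J] {p : J → ℝ} (hp : IsProbDist p) :
    HasSum p 1 :=
  hasSum_one_of_tsum_eq_one hp.2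

theorem IsPOVM.hasSum {n : ℕ} {J : Type} [Countable J] {M : J → Matrix (Fin n) (Fin n) ℂ}
    (hM : IsPOVM M) : HasSum M 1 :=
  hasSum_one_of_tsum_eq_one hM.2

theorem HasSum.smul_of_finiteDimensional {ι κ E : Type*} [NormedAddCommGroup E]
    [NormedSpace ℝ E] [FiniteDimensional ℝ E] {p : ι → ℝ} {v : κ → E} {a : ℝ} {x : E}
    (hp : HasSum p a) (hv : HasSum v x) : HasSum (fun i : ι × κ => p i.1 • v i.2) (a • x) := by
  have := FiniteDimensional.complete ℝ E
  refine hp.smul hv (Summable.of_norm ?_)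
  simpa only [norm_smul] using
    hp.summable.norm.mul_of_nonneg hv.summable.norm (fun _ => norm_nonneg _)
      (fun _ => norm_nonneg _)

section NoisyJoint

def noisyJoint {n : ℕ} {J K : Type} (l : ℝ) (M₁ : J → Matrix (Fin n) (Fin n) ℂ)
    (M₂ : K → Matrix (Fin n) (Fin n) ℂ) (p₁ : J → ℝ) (p₂ : K → ℝ) :
    J × K → Matrix (Fin n) (Fin n) ℂ :=
  fun jk => ((l * p₂ jk.2 : ℝ) : ℂ) • M₁ jk.1 + (((1 - l) * p₁ jk.1 : ℝ) : ℂ) • M₂ jk.2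

variable {n : ℕ} {J K : Type} (l : ℝ) {M₁ : J → Matrix (Fin n) (Fin n) ℂ}
  {M₂ : K → Matrix (Fin n) (Fin n) ℂ} {p₁ : J → ℝ} {p₂ : K → ℝ}

theorem posSemidef_noisyJoint (hM₁ : ∀ j, (M₁ j).PosSemidef) (hM₂ : ∀ k, (M₂ k).PosSemidef)
    (hp₁ : ∀ j, 0 ≤ p₁ j) (hp₂ : ∀ k, 0 ≤ p₂ k) (hl0 : 0 ≤ l) (hl1 : l ≤ 1) (jk : J × K) :
    (noisyJoint l M₁ M₂ p₁ p₂ jk).PosSemidef := by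
  simp only [noisyJoint, Complex.coe_smul]
  exact ((hM₁ _).smul (mul_nonneg hl0 (hp₂ _))).add
    ((hM₂ _).smul (mul_nonneg (sub_nonneg.2 hl1) (hp₁ _)))

theorem hasSum_noisyJoint (hM₁ : HasSum M₁ 1) (hM₂ : HasSum M₂ 1) (hp₁ : HasSum p₁ 1)
    (hp₂ : HasSum p₂ 1) : HasSum (noisyJoint l M₁ M₂ p₁ p₂) 1 := by
  have h₁ : HasSum (fun jk : J × K => (l * p₂ jk.2) • M₁ jk.1) (l • 1) := by
    have := (hp₂.mul_left l).smul_of_finiteDimensional hM₁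
    rw [mul_one] at this
    exact (Equiv.prodComm J K).symm.hasSum_iff.mp this
  have h₂ : HasSum (fun jk : J × K => ((1 - l) * p₁ jk.1) • M₂ jk.2) ((1 - l) • 1) := by
    have := (hp₁.mul_left (1 - l)).smul_of_finiteDimensional hM₂
    rwa [mul_one] at this
  have h := h₁.add h₂
  rw [← add_smul, add_sub_cancel, one_smul] at h
  convert h using 1
  ext1 jk
  simp only [noisyJoint, Complex.coe_smul]

theorem noisyJoint_fst_marginal_eq_mix [Countable J] {T₁ : J → Matrix (Fin n) (Fin n) ℂ}
    (hM₂ : HasSum M₂ 1) (hp₂ : HasSum p₂ 1) (hT₁ : ∀ j, T₁ j = ((p₁ j : ℝ) : ℂ) • 1) (j : J) :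
    ∑' k, noisyJoint l M₁ M₂ p₁ p₂ (j, k) = mix l M₁ T₁ j := by
  have hj := ((hp₂.mul_left l).smul_const (M₁ j)).add (hM₂.const_smul ((1 - l) * p₁ j))
  simp only [mul_one] at hj
  simp only [noisyJoint, mix, hT₁, Complex.coe_smul, hj.tsum_eq, smul_smul]

theorem noisyJoint_snd_marginal_eq_mix [Countable K] {T₂ : K → Matrix (Fin n) (Fin n) ℂ}
    (hM₁ : HasSum M₁ 1) (hp₁ : HasSum p₁ 1) (hT₂ : ∀ k, T₂ k = ((p₂ k : ℝ) : ℂ) • 1) (k : K) :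
    ∑' j, noisyJoint l M₁ M₂ p₁ p₂ (j, k) = mix (1 - l) M₂ T₂ k := by
  have hk := (hM₁.const_smul (l * p₂ k)).add ((hp₁.mul_left (1 - l)).smul_const (M₂ k))
  simp only [mul_one] at hk
  simp only [noisyJoint, mix, hT₂, Complex.coe_smul, hk.tsum_eq, smul_smul, sub_sub_cancel,
    add_comm]

end NoisyJoint

/-- Mixing two POVMs with complementary weights with trivial observables
yields a jointly measurable pair; the explicit joint observable is
`G(j,k) = λ p₂(k) M₁(j) + (1−λ) p₁(j) M₂(k)`. -/
theorem mixed_povms_jointly_measurable {n : ℕ} {J K : Type} [Countable J] [Countable K]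
    (M₁ : J → Matrix (Fin n) (Fin n) ℂ) (M₂ : K → Matrix (Fin n) (Fin n) ℂ)
    (hM₁ : IsPOVM M₁) (hM₂ : IsPOVM M₂)
    (p₁ : J → ℝ) (p₂ : K → ℝ) (hp₁ : IsProbDist p₁) (hp₂ : IsProbDist p₂)
    (T₁ : J → Matrix (Fin n) (Fin n) ℂ) (T₂ : K → Matrix (Fin n) (Fin n) ℂ)
    (hT₁ : ∀ j, T₁ j = ((p₁ j : ℝ) : ℂ) • 1) (hT₂ : ∀ k, T₂ k = ((p₂ k : ℝ) : ℂ) • 1)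
    (l : ℝ) (hl0 : 0 ≤ l) (hl1 : l ≤ 1) :
    (IsPOVM (fun jk : J × K =>
        ((l * p₂ jk.2 : ℝ) : ℂ) • M₁ jk.1 + (((1 - l) * p₁ jk.1 : ℝ) : ℂ) • M₂ jk.2) ∧
      (∀ j, ∑' k, (((l * p₂ k : ℝ) : ℂ) • M₁ j + (((1 - l) * p₁ j : ℝ) : ℂ) • M₂ k)
          = mix l M₁ T₁ j) ∧
      (∀ k, ∑' j, (((l * p₂ k : ℝ) : ℂ) • M₁ j + (((1 - l) * p₁ j : ℝ) : ℂ) • M₂ k)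
          = mix (1 - l) M₂ T₂ k)) ∧
    JointlyMeasurable (mix l M₁ T₁) (mix (1 - l) M₂ T₂) := by
  have hG : IsPOVM (noisyJoint l M₁ M₂ p₁ p₂) :=
    ⟨posSemidef_noisyJoint l hM₁.1 hM₂.1 hp₁.1 hp₂.1 hl0 hl1,
      (hasSum_noisyJoint l hM₁.hasSum hM₂.hasSum hp₁.hasSum hp₂.hasSum).tsum_eq⟩
  have hmarg₁ : ∀ j, ∑' k, noisyJoint l M₁ M₂ p₁ p₂ (j, k) = mix l M₁ T₁ j :=
    noisyJoint_fst_marginal_eq_mix l hM₂.hasSum hp₂.hasSum hT₁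
  have hmarg₂ : ∀ k, ∑' j, noisyJoint l M₁ M₂ p₁ p₂ (j, k) = mix (1 - l) M₂ T₂ k :=
    noisyJoint_snd_marginal_eq_mix l hM₁.hasSum hp₁.hasSum hT₂
  exact ⟨⟨hG, hmarg₁, hmarg₂⟩, _, hG, hmarg₁, hmarg₂⟩
end

section
/- For the two sharp qubit observables M_x(±1) = (I ± σ_x)/2 and M_y(±1) = (I ± σ_y)/2 on ℂ², and the uniform trivial observable T(±1) = I/2, the smeared observables λM_x + (1−λ)T and μM_y + (1−μ)T are jointly measurable if λ² + μ² ≤ 1. -/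
open scoped ComplexOrder
/-- The Pauli matrix `σ_x`. -/
def sigmaX : Matrix (Fin 2) (Fin 2) ℂ := !![0, 1; 1, 0]

/-- The Pauli matrix `σ_y`. -/
def sigmaY : Matrix (Fin 2) (Fin 2) ℂ := !![0, -Complex.I; Complex.I, 0]

/-- The sign `±1` associated to a Boolean outcome. -/
def sgn (b : Bool) : ℝ := if b then 1 else -1

/-- The smeared observable `λ M_x + (1-λ) T`, i.e. `b ↦ (I + sgn b · λ σ_x)/2`. -/
noncomputable def smearedX (l : ℝ) : Bool → Matrix (Fin 2) (Fin 2) ℂ :=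
  fun b => (1 / 2 : ℂ) • (1 + ((sgn b * l : ℝ) : ℂ) • sigmaX)

/-- The smeared observable `μ M_y + (1-μ) T`, i.e. `b ↦ (I + sgn b · μ σ_y)/2`. -/
noncomputable def smearedY (m : ℝ) : Bool → Matrix (Fin 2) (Fin 2) ℂ :=
  fun b => (1 / 2 : ℂ) • (1 + ((sgn b * m : ℝ) : ℂ) • sigmaY)

/-! The joint observable is `G(j, k) = (1 + j λ σ_x + k μ σ_y) / 4`: summing out either sign
leaves the two smeared observables. Since `σ_x`, `σ_y` are anticommuting Hermitian involutions,
`N = j λ σ_x + k μ σ_y` is Hermitian with `N² = (λ² + μ²) • 1`, and then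
`2 (1 + N) = (1 + N)ᴴ (1 + N) + (1 - λ² - μ²) • 1` is positive semidefinite. -/

namespace Matrix

variable {n : Type*} [Fintype n] [DecidableEq n]

theorem posSemidef_one_add_of_mul_self_eq {N : Matrix n n ℂ} (hN : N.IsHermitian) {c : ℝ}
    (hc : c ≤ 1) (hNN : N * N = (c : ℂ) • 1) : (1 + N).PosSemidef := by
  have hsq : (1 + N)ᴴ * (1 + N) = 1 + 2 • N + (c : ℂ) • 1 := by
    rw [conjTranspose_add, conjTranspose_one, hN.eq, add_mul, mul_add, mul_add, hNN]
    simp only [mul_one, one_mul]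
    abel
  have hdecomp :
      1 + N = (1 / 2 : ℝ) • ((1 + N)ᴴ * (1 + N) + (1 - c) • (1 : Matrix n n ℂ)) := by
    rw [hsq]
    module
  rw [hdecomp]
  exact ((posSemidef_conjTranspose_mul_self _).add (PosSemidef.one.smul (sub_nonneg.2 hc))).smul
    (by norm_num)

theorem posSemidef_one_add_smul_add_smul {A B : Matrix n n ℂ} (hA : A.IsHermitian)
    (hB : B.IsHermitian) (hAA : A * A = 1) (hBB : B * B = 1) (hAB : A * B + B * A = 0)
    {a b : ℝ} (hab : a ^ 2 + b ^ 2 ≤ 1) :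
    (1 + (a : ℂ) • A + (b : ℂ) • B).PosSemidef := by
  rw [add_assoc]
  refine posSemidef_one_add_of_mul_self_eq ?_ hab ?_
  · exact (hA.smul (Complex.conj_ofReal a)).add (hB.smul (Complex.conj_ofReal b))
  · calc ((a : ℂ) • A + (b : ℂ) • B) * ((a : ℂ) • A + (b : ℂ) • B)
        = ((a : ℂ) * a) • (A * A) + ((b : ℂ) * b) • (B * B)
            + ((a : ℂ) * b) • (A * B + B * A) := by
          simp only [add_mul, mul_add, smul_mul_smul_comm, smul_add, mul_comm (b : ℂ) a]
          abel
      _ = ((a ^ 2 + b ^ 2 : ℝ) : ℂ) • 1 := by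
          rw [hAA, hBB, hAB]
          push_cast
          module

end Matrix

theorem sigmaX_isHermitian : sigmaX.IsHermitian := by
  ext i j; fin_cases i <;> fin_cases j <;> simp [sigmaX]

theorem sigmaY_isHermitian : sigmaY.IsHermitian := by
  ext i j; fin_cases i <;> fin_cases j <;> simp [sigmaY]

theorem sigmaX_mul_self : sigmaX * sigmaX = 1 := by
  simp [sigmaX, Matrix.one_fin_two]

theorem sigmaY_mul_self : sigmaY * sigmaY = 1 := by
  simp [sigmaY, Matrix.one_fin_two]

theorem sigmaX_mul_sigmaY_add_sigmaY_mul_sigmaX : sigmaX * sigmaY + sigmaY * sigmaX = 0 := by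
  ext i j; fin_cases i <;> fin_cases j <;> simp [sigmaX, sigmaY]

theorem sgn_sq (b : Bool) : sgn b ^ 2 = 1 := by
  cases b <;> norm_num [sgn]

section unbiasedJoint

variable {n : ℕ}

noncomputable def unbiasedJoint (a b : ℝ) (A B : Matrix (Fin n) (Fin n) ℂ) :
    Bool × Bool → Matrix (Fin n) (Fin n) ℂ :=
  fun p => (1 / 4 : ℂ) • (1 + ((sgn p.1 * a : ℝ) : ℂ) • A + ((sgn p.2 * b : ℝ) : ℂ) • B)

variable (a b : ℝ) (A B : Matrix (Fin n) (Fin n) ℂ)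

theorem tsum_unbiasedJoint_snd (j : Bool) :
    ∑' k, unbiasedJoint a b A B (j, k) = (1 / 2 : ℂ) • (1 + ((sgn j * a : ℝ) : ℂ) • A) := by
  rw [tsum_fintype, Fintype.sum_bool]
  simp only [unbiasedJoint, sgn, ↓reduceIte]
  push_cast
  module

theorem tsum_unbiasedJoint_fst (k : Bool) :
    ∑' j, unbiasedJoint a b A B (j, k) = (1 / 2 : ℂ) • (1 + ((sgn k * b : ℝ) : ℂ) • B) := by
  rw [tsum_fintype, Fintype.sum_bool]
  simp only [unbiasedJoint, sgn, ↓reduceIte]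
  push_cast
  module

theorem tsum_unbiasedJoint : ∑' p, unbiasedJoint a b A B p = 1 := by
  calc ∑' p, unbiasedJoint a b A B p = ∑ j, ∑' k, unbiasedJoint a b A B (j, k) := by
        simp only [tsum_fintype, Fintype.sum_prod_type]
    _ = 1 := by
        simp only [tsum_unbiasedJoint_snd, Fintype.sum_bool, sgn, ↓reduceIte]
        push_cast
        module

variable {A B} in
theorem isPOVM_unbiasedJoint (hA : A.IsHermitian) (hB : B.IsHermitian) (hAA : A * A = 1)
    (hBB : B * B = 1) (hAB : A * B + B * A = 0) (hab : a ^ 2 + b ^ 2 ≤ 1) :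
    IsPOVM (unbiasedJoint a b A B) := by
  refine ⟨fun p => ?_, tsum_unbiasedJoint a b A B⟩
  have hsigns : (sgn p.1 * a) ^ 2 + (sgn p.2 * b) ^ 2 ≤ 1 := by
    simpa only [mul_pow, sgn_sq, one_mul] using hab
  exact (Matrix.posSemidef_one_add_smul_add_smul hA hB hAA hBB hAB hsigns).smul
    (by norm_num [Complex.le_def])

end unbiasedJoint

theorem smeared_spin_jointly_measurable_general (l m : ℝ)
    (h : l ^ 2 + m ^ 2 ≤ 1) :
    JointlyMeasurable (smearedX l) (smearedY m) :=
  ⟨unbiasedJoint l m sigmaX sigmaY,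
    isPOVM_unbiasedJoint l m sigmaX_isHermitian sigmaY_isHermitian sigmaX_mul_self sigmaY_mul_self
      sigmaX_mul_sigmaY_add_sigmaY_mul_sigmaX h,
    tsum_unbiasedJoint_snd l m sigmaX sigmaY, tsum_unbiasedJoint_fst l m sigmaX sigmaY⟩

/-- The unbiased smearings of two orthogonal spin-1/2 observables are
jointly measurable whenever `λ² + μ² ≤ 1`. -/
theorem smeared_spin_jointly_measurable (l m : ℝ)
    (hl0 : 0 ≤ l) (hl1 : l ≤ 1) (hm0 : 0 ≤ m) (hm1 : m ≤ 1)
    (h : l ^ 2 + m ^ 2 ≤ 1) :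
    JointlyMeasurable (smearedX l) (smearedY m) :=
  smeared_spin_jointly_measurable_general l m h
end

section
/- For the qubit observables λM_x + (1−λ)T and μM_y + (1−μ)T with the uniform trivial observable T(±1)=I/2, joint measurability fails whenever λ² + μ² > 1. -/
/-!
Positivity of an effect bounds the modulus of each entry by the mean of the two corresponding
diagonal entries, so the `(0, 1)` entries of the four effects of a joint POVM on `ℂ²` have total
modulus at most `(tr I)/2 = 1`. The marginal conditions give `G(+,+) - G(-,-) = A₊ + B₊ - I` and
`G(+,-) - G(-,+) = A₊ - B₊`, whose `(0, 1)` entries here are `(λ ∓ iμ)/2`, each of modulus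
`√(λ² + μ²)/2`. Hence `√(λ² + μ²) ≤ 1`.
-/

open scoped ComplexOrder
namespace Matrix.PosSemidef

variable {n : Type*} {M : Matrix n n ℂ}

theorem sq_norm_apply_le (hM : M.PosSemidef) (i j : n) :
    ‖M i j‖ ^ 2 ≤ (M i i).re * (M j j).re := by
  have hdet := (hM.submatrix ![i, j]).det_nonneg
  rw [det_fin_two] at hdet
  simp only [submatrix_apply, cons_val_zero, cons_val_one] at hdet
  rw [← hM.1.apply j i] at hdet
  have hi := Complex.nonneg_iff.1 (hM.diag_nonneg (i := i))
  have hj := Complex.nonneg_iff.1 (hM.diag_nonneg (i := j))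
  have hdet_re := (Complex.nonneg_iff.1 hdet).1
  simp only [RCLike.star_def, Complex.sub_re, Complex.mul_re, ← hi.2, ← hj.2, mul_zero, sub_zero,
    Complex.conj_re, Complex.conj_im, mul_neg, sub_neg_eq_add, sub_nonneg] at hdet_re
  rw [Complex.sq_norm, Complex.normSq_apply]
  linarith

theorem two_mul_norm_apply_le (hM : M.PosSemidef) (i j : n) :
    2 * ‖M i j‖ ≤ (M i i).re + (M j j).re := by
  have hi := (Complex.nonneg_iff.1 (hM.diag_nonneg (i := i))).1
  have hj := (Complex.nonneg_iff.1 (hM.diag_nonneg (i := j))).1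
  nlinarith [hM.sq_norm_apply_le i j, sq_nonneg ((M i i).re - (M j j).re), norm_nonneg (M i j)]

end Matrix.PosSemidef

theorem IsPOVM.sum_norm_apply_le_one {n : ℕ} {J : Type} [Fintype J]
    {G : J → Matrix (Fin n) (Fin n) ℂ} (hG : IsPOVM G) (i k : Fin n) :
    ∑ j, ‖G j i k‖ ≤ 1 := by
  have hsum : ∑ j, G j = 1 := (tsum_fintype G).symm.trans hG.2
  have hdiag (i : Fin n) : ∑ j, (G j i i).re = 1 := by
    rw [← Complex.re_sum, ← Matrix.sum_apply, hsum, Matrix.one_apply_eq, Complex.one_re]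
  have hbound : ∑ j, 2 * ‖G j i k‖ ≤ ∑ j, ((G j i i).re + (G j k k).re) :=
    Finset.sum_le_sum fun j _ => (hG.1 j).two_mul_norm_apply_le i k
  rw [← Finset.mul_sum, Finset.sum_add_distrib, hdiag, hdiag] at hbound
  linarith

theorem JointlyMeasurable.norm_add_norm_le_one {n : ℕ} {A B : Bool → Matrix (Fin n) (Fin n) ℂ}
    (h : JointlyMeasurable A B) (i k : Fin n) :
    ‖(A true + B true - 1) i k‖ + ‖(A true - B true) i k‖ ≤ 1 := by
  obtain ⟨G, hG, hA, hB⟩ := h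
  have hsum : G (true, true) + G (true, false) + G (false, true) + G (false, false) = 1 := by
    rw [← hG.2, tsum_fintype, Fintype.sum_prod_type, Fintype.sum_bool, Fintype.sum_bool,
      Fintype.sum_bool]
    abel
  have hA' := hA true
  have hB' := hB true
  rw [tsum_fintype, Fintype.sum_bool] at hA' hB'
  have hplus : A true + B true - 1 = G (true, true) - G (false, false) := by
    rw [← hA', ← hB', ← hsum]; abel
  have hminus : A true - B true = G (true, false) - G (false, true) := by
    rw [← hA', ← hB']; abel
  have hfour := hG.sum_norm_apply_le_one i k
  rw [Fintype.sum_prod_type, Fintype.sum_bool, Fintype.sum_bool, Fintype.sum_bool] at hfour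
  rw [hplus, hminus, Matrix.sub_apply, Matrix.sub_apply]
  linarith [norm_sub_le (G (true, true) i k) (G (false, false) i k),
    norm_sub_le (G (true, false) i k) (G (false, true) i k)]

theorem smearedX_add_smearedY_sub_one_apply_zero_one (l m : ℝ) :
    (smearedX l true + smearedY m true - 1) 0 1 = (l + (-m : ℝ) * Complex.I) / 2 := by
  simp [smearedX, smearedY, sgn, sigmaX, sigmaY, div_eq_inv_mul, mul_add, sub_eq_add_neg]

theorem smearedX_sub_smearedY_apply_zero_one (l m : ℝ) :
    (smearedX l true - smearedY m true) 0 1 = (l + m * Complex.I) / 2 := by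
  simp [smearedX, smearedY, sgn, sigmaX, sigmaY, div_eq_inv_mul, mul_add, sub_eq_add_neg]

theorem smeared_spin_incompatible_general (l m : ℝ) (h : 1 < l ^ 2 + m ^ 2) :
    ¬ JointlyMeasurable (smearedX l) (smearedY m) := by
  intro hJM
  have key := hJM.norm_add_norm_le_one 0 1
  rw [smearedX_add_smearedY_sub_one_apply_zero_one, smearedX_sub_smearedY_apply_zero_one,
    norm_div, norm_div, Complex.norm_add_mul_I, Complex.norm_add_mul_I, neg_sq,
    Complex.norm_two] at key
  have hsqrt : √(l ^ 2 + m ^ 2) ≤ 1 := by linarith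
  exact (Real.sqrt_le_one.1 hsqrt).not_gt h

/-- The unbiased smearings of two orthogonal spin-1/2 observables are
incompatible whenever `λ² + μ² > 1`. -/
theorem smeared_spin_incompatible (l m : ℝ)
    (hl0 : 0 ≤ l) (hl1 : l ≤ 1) (hm0 : 0 ≤ m) (hm1 : m ≤ 1)
    (h : 1 < l ^ 2 + m ^ 2) :
    ¬ JointlyMeasurable (smearedX l) (smearedY m) :=
  smeared_spin_incompatible_general l m h
end

section
/- Two projection valued measures on a Hilbert space are jointly measurable if and only if all their projections pairwise commute. -/
open scoped ComplexOrder
/-- A projection valued measure: mutually orthogonal (self-adjoint idempotent)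
projections summing to the identity. -/
def IsPVM {n : ℕ} {J : Type} [Countable J] (P : J → Matrix (Fin n) (Fin n) ℂ) : Prop :=
  (∀ j, (P j).IsHermitian) ∧ (∀ j, P j * P j = P j) ∧
    (∀ j k, j ≠ k → P j * P k = 0) ∧ ∑' j, P j = 1

/-! Let `G` be a joint POVM of `P` and the PVM `Q`. Each effect satisfies `0 ≤ G (j, k) ≤ Q k`,
and a positive element below a projection is absorbed by it, so `G (j, k) * Q k = G (j, k)`;
by orthogonality of the `Q k` this gives `P j * Q k = G (j, k)`. The right-hand side is
self-adjoint, hence `P j` and `Q k` commute. Conversely, products of commuting projections are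
projections, and `P j * Q k` is a joint POVM. -/

section StarProjection

variable {A : Type*} [NonUnitalCStarAlgebra A] [PartialOrder A] [StarOrderedRing A]
  {J K : Type*} [Fintype J] [Fintype K] {G : J × K → A} {p : J → A} {q : K → A}

theorem eq_mul_of_marginals_of_isStarProjection (hG : ∀ i, 0 ≤ G i)
    (hGp : ∀ j, ∑ k, G (j, k) = p j) (hGq : ∀ k, ∑ j, G (j, k) = q k)
    (hq : ∀ k, IsStarProjection (q k)) (hq_orth : Pairwise fun k k' ↦ q k * q k' = 0)
    (j : J) (k : K) : G (j, k) = p j * q k := by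
  have h_absorb (k' : K) : G (j, k') * q k' = G (j, k') := by
    have h_le : G (j, k') ≤ q k' :=
      hGq k' ▸ Finset.single_le_sum (fun i _ ↦ hG (i, k')) (Finset.mem_univ j)
    exact ((hq k').mul_right_and_mul_left_of_nonneg_of_le (hG _) h_le).1
  rw [← hGp j, Finset.sum_mul, Finset.sum_eq_single k, h_absorb]
  · intro k' _ hk'
    rw [← h_absorb k', mul_assoc, hq_orth hk', mul_zero]
  · simp

theorem commute_of_marginals_of_isStarProjection (hG : ∀ i, 0 ≤ G i)
    (hGp : ∀ j, ∑ k, G (j, k) = p j) (hGq : ∀ k, ∑ j, G (j, k) = q k)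
    (hp : ∀ j, IsSelfAdjoint (p j)) (hq : ∀ k, IsStarProjection (q k))
    (hq_orth : Pairwise fun k k' ↦ q k * q k' = 0) (j : J) (k : K) :
    Commute (p j) (q k) := by
  have h_prod := eq_mul_of_marginals_of_isStarProjection hG hGp hGq hq hq_orth j k
  calc p j * q k = G (j, k) := h_prod.symm
    _ = star (G (j, k)) := (IsSelfAdjoint.of_nonneg (hG _)).star_eq.symm
    _ = q k * p j := by rw [h_prod, star_mul, (hq k).isSelfAdjoint.star_eq, (hp j).star_eq]

end StarProjection

namespace IsPVM

variable {n : ℕ} {J K : Type} {P : J → Matrix (Fin n) (Fin n) ℂ} {Q : K → Matrix (Fin n) (Fin n) ℂ}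

theorem isStarProjection [Countable J] (hP : IsPVM P) (j : J) : IsStarProjection (P j) :=
  ⟨hP.2.1 j, hP.1 j⟩

theorem pairwise_mul_eq_zero [Countable J] (hP : IsPVM P) : Pairwise fun j j' ↦ P j * P j' = 0 :=
  hP.2.2.1

theorem sum_eq_one [Fintype J] (hP : IsPVM P) : ∑ j, P j = 1 := by
  simpa only [tsum_fintype] using hP.2.2.2

end IsPVM

section JointMeasurability

variable {n : ℕ} {J K : Type} [Fintype J] [Fintype K]
  {P : J → Matrix (Fin n) (Fin n) ℂ} {Q : K → Matrix (Fin n) (Fin n) ℂ}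

open scoped MatrixOrder Matrix.Norms.L2Operator in
theorem JointlyMeasurable.commute_of_isPVM (h : JointlyMeasurable P Q)
    (hP : ∀ j, (P j).IsHermitian) (hQ : IsPVM Q) (j : J) (k : K) : Commute (P j) (Q k) := by
  obtain ⟨G, ⟨hG, -⟩, hGP, hGQ⟩ := h
  simp only [tsum_fintype] at hGP hGQ
  exact commute_of_marginals_of_isStarProjection (fun i ↦ (hG i).nonneg) hGP hGQ hP
    hQ.isStarProjection hQ.pairwise_mul_eq_zero j k

open scoped MatrixOrder in
theorem IsPVM.jointlyMeasurable_of_commute (hP : IsPVM P) (hQ : IsPVM Q)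
    (hPQ : ∀ j k, Commute (P j) (Q k)) : JointlyMeasurable P Q := by
  refine ⟨fun jk ↦ P jk.1 * Q jk.2, ⟨fun jk ↦ ?_, ?_⟩, fun j ↦ ?_, fun k ↦ ?_⟩ <;>
    simp only [tsum_fintype]
  · exact Matrix.nonneg_iff_posSemidef.mp
      ((hP.isStarProjection _).mul (hQ.isStarProjection _) (hPQ _ _)).nonneg
  · rw [Fintype.sum_prod_type, ← Finset.sum_mul_sum, hP.sum_eq_one, hQ.sum_eq_one, one_mul]
  · rw [← Finset.mul_sum, hQ.sum_eq_one, mul_one]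
  · rw [← Finset.sum_mul, hP.sum_eq_one, one_mul]

end JointMeasurability

/-- Two projection valued measures are jointly measurable if and only if
all their projections pairwise commute. -/
theorem pvms_jointly_measurable_iff_commute {n : ℕ} {J K : Type} [Fintype J] [Fintype K]
    (P : J → Matrix (Fin n) (Fin n) ℂ) (Q : K → Matrix (Fin n) (Fin n) ℂ)
    (hP : IsPVM P) (hQ : IsPVM Q) :
    JointlyMeasurable P Q ↔ ∀ j k, P j * Q k = Q k * P j :=
  ⟨fun h j k ↦ (h.commute_of_isPVM hP.1 hQ j k).eq, hP.jointlyMeasurable_of_commute hQ⟩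
end

section
/- The set J(M₁,M₂) of pairs (λ,μ) ∈ [0,1]² for which there exist trivial observables T₁, T₂ making λM₁ + (1−λ)T₁ and μM₂ + (1−μ)T₂ jointly measurable is a convex subset of [0,1]². -/
open scoped ComplexOrder
/-- The joint measurability region `J(M₁,M₂)`: the set of `(λ,μ) ∈ [0,1]²` for which
some trivial observables `T₁, T₂` make `λM₁+(1−λ)T₁` and `μM₂+(1−μ)T₂` jointly measurable. -/
def JRegion {n : ℕ} {J K : Type} [Countable J] [Countable K]
    (M₁ : J → Matrix (Fin n) (Fin n) ℂ) (M₂ : K → Matrix (Fin n) (Fin n) ℂ) :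
    Set (ℝ × ℝ) :=
  {x | x.1 ∈ Set.Icc (0 : ℝ) 1 ∧ x.2 ∈ Set.Icc (0 : ℝ) 1 ∧
    ∃ (T₁ : J → Matrix (Fin n) (Fin n) ℂ) (T₂ : K → Matrix (Fin n) (Fin n) ℂ),
      IsTrivialPOVM T₁ ∧ IsTrivialPOVM T₂ ∧
        JointlyMeasurable (mix x.1 M₁ T₁) (mix x.2 M₂ T₂)}

/-!
A convex combination of two joint POVMs is a joint POVM whose marginals are the corresponding
convex combinations of marginals. A convex combination of the mixtures `λM + (1-λ)T` and
`μM + (1-μ)S` is again a mixture of `M`, with parameter the same convex combination of `λ` and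
`μ`: its trivial part `a(1-λ)T + b(1-μ)S` is, after renormalisation, a trivial observable.
-/

theorem summable_of_tsum_ne_zero {ι α : Type*} [AddCommMonoid α] [TopologicalSpace α]
    {f : ι → α} (h : ∑' i, f i ≠ 0) : Summable f :=
  not_not.mp fun hf => h (tsum_eq_zero_of_not_summable hf)

theorem Summable.tsum_smul_add_smul {ι R α : Type*} [Semiring R] [AddCommMonoid α] [Module R α]
    [TopologicalSpace α] [ContinuousAdd α] [ContinuousConstSMul R α] [T2Space α]
    {f g : ι → α} (hf : Summable f) (hg : Summable g) (a b : R) :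
    ∑' i, (a • f i + b • g i) = a • ∑' i, f i + b • ∑' i, g i := by
  rw [(hf.const_smul a).tsum_add (hg.const_smul b), hf.tsum_const_smul, hg.tsum_const_smul]

theorem IsProbDist.summable {J : Type} [Countable J] {p : J → ℝ} (hp : IsProbDist p) :
    Summable p :=
  summable_of_tsum_ne_zero (hp.2 ▸ one_ne_zero)

theorem IsProbDist.exists_mul_add_mul_eq {J : Type} [Countable J] {p q : J → ℝ}
    (hp : IsProbDist p) (hq : IsProbDist q) {c d : ℝ} (hc : 0 ≤ c) (hd : 0 ≤ d) :
    ∃ r : J → ℝ, IsProbDist r ∧ ∀ j, c * p j + d * q j = (c + d) * r j := by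
  rcases (add_nonneg hc hd).eq_or_lt with hcd | hcd
  · obtain ⟨rfl, rfl⟩ := (add_eq_zero_iff_of_nonneg hc hd).1 hcd.symm
    exact ⟨p, hp, fun j => by ring⟩
  · refine ⟨fun j => (c * p j + d * q j) / (c + d), ⟨fun j => ?_, ?_⟩, fun j => ?_⟩
    · exact div_nonneg (add_nonneg (mul_nonneg hc (hp.1 j)) (mul_nonneg hd (hq.1 j))) hcd.le
    · rw [tsum_div_const, (hp.summable.mul_left c).tsum_add (hq.summable.mul_left d),
        tsum_mul_left, tsum_mul_left, hp.2, hq.2, mul_one, mul_one, div_self hcd.ne']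
    · rw [mul_div_cancel₀ _ hcd.ne']

theorem IsPOVM.summable {n : ℕ} {J : Type} [Countable J] {M : J → Matrix (Fin n) (Fin n) ℂ}
    (hM : IsPOVM M) : Summable M := by
  rcases subsingleton_or_nontrivial (Matrix (Fin n) (Fin n) ℂ) with _ | _
  · exact .of_subsingleton_cod
  · exact summable_of_tsum_ne_zero (hM.2 ▸ one_ne_zero)

section ConvexCombination

variable {n : ℕ} {a b : ℝ}

theorem IsPOVM.convex_comb {J : Type} [Countable J] {G H : J → Matrix (Fin n) (Fin n) ℂ}
    (hG : IsPOVM G) (hH : IsPOVM H) (ha : 0 ≤ a) (hb : 0 ≤ b) (hab : a + b = 1) :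
    IsPOVM ((a : ℂ) • G + (b : ℂ) • H) := by
  refine ⟨fun j => ((hG.1 j).smul (Complex.zero_le_real.2 ha)).add
    ((hH.1 j).smul (Complex.zero_le_real.2 hb)), ?_⟩
  simp only [Pi.add_apply, Pi.smul_apply]
  rw [hG.summable.tsum_smul_add_smul hH.summable, hG.2, hH.2, ← add_smul, ← Complex.ofReal_add,
    hab, Complex.ofReal_one, one_smul]

theorem JointlyMeasurable.convex_comb {J K : Type} [Countable J] [Countable K]
    {A₁ B₁ : J → Matrix (Fin n) (Fin n) ℂ} {A₂ B₂ : K → Matrix (Fin n) (Fin n) ℂ}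
    (hA : JointlyMeasurable A₁ A₂) (hB : JointlyMeasurable B₁ B₂)
    (ha : 0 ≤ a) (hb : 0 ≤ b) (hab : a + b = 1) :
    JointlyMeasurable ((a : ℂ) • A₁ + (b : ℂ) • B₁) ((a : ℂ) • A₂ + (b : ℂ) • B₂) := by
  obtain ⟨G, hG, hG₁, hG₂⟩ := hA
  obtain ⟨H, hH, hH₁, hH₂⟩ := hB
  refine ⟨(a : ℂ) • G + (b : ℂ) • H, hG.convex_comb hH ha hb hab, fun j => ?_, fun k => ?_⟩
  · simp only [Pi.add_apply, Pi.smul_apply]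
    rw [(hG.summable.prod_factor j).tsum_smul_add_smul (hH.summable.prod_factor j), hG₁, hH₁]
  · simp only [Pi.add_apply, Pi.smul_apply]
    have hGk : Summable fun j => G (j, k) := hG.summable.prod_symm.prod_factor k
    have hHk : Summable fun j => H (j, k) := hH.summable.prod_symm.prod_factor k
    rw [hGk.tsum_smul_add_smul hHk, hG₂, hH₂]

theorem mix_convex_comb {J : Type} [Countable J] (M : J → Matrix (Fin n) (Fin n) ℂ)
    {T S : J → Matrix (Fin n) (Fin n) ℂ} (hT : IsTrivialPOVM T) (hS : IsTrivialPOVM S)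
    (ha : 0 ≤ a) (hb : 0 ≤ b) (hab : a + b = 1) {l₁ l₂ : ℝ} (hl₁ : l₁ ≤ 1) (hl₂ : l₂ ≤ 1) :
    ∃ U, IsTrivialPOVM U ∧
      (a : ℂ) • mix l₁ M T + (b : ℂ) • mix l₂ M S = mix (a * l₁ + b * l₂) M U := by
  obtain ⟨p, hp, hTp⟩ := hT
  obtain ⟨q, hq, hSq⟩ := hS
  obtain ⟨r, hr, hpqr⟩ := hp.exists_mul_add_mul_eq hq
    (mul_nonneg ha (sub_nonneg.2 hl₁)) (mul_nonneg hb (sub_nonneg.2 hl₂))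
  refine ⟨fun j => (r j : ℂ) • 1, ⟨r, hr, fun _ => rfl⟩, funext fun j => ?_⟩
  have hpqr' : a * (1 - l₁) * p j + b * (1 - l₂) * q j = (1 - (a * l₁ + b * l₂)) * r j := by
    rw [hpqr j]; linear_combination r j * hab
  have hpqrC : (a : ℂ) * (1 - l₁) * p j + b * (1 - l₂) * q j
      = (1 - (a * l₁ + b * l₂)) * r j := by
    exact_mod_cast hpqr'
  simp only [mix, Pi.add_apply, Pi.smul_apply, hTp, hSq]
  match_scalars
  · ring
  · linear_combination hpqrC

end ConvexCombination

theorem jRegion_convex_general {n : ℕ} {J K : Type} [Countable J] [Countable K]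
    (M₁ : J → Matrix (Fin n) (Fin n) ℂ) (M₂ : K → Matrix (Fin n) (Fin n) ℂ) :
    Convex ℝ (JRegion M₁ M₂) := by
  rintro x ⟨hx₁, hx₂, T₁, T₂, hT₁, hT₂, hx⟩ y ⟨hy₁, hy₂, S₁, S₂, hS₁, hS₂, hy⟩ a b ha hb hab
  obtain ⟨U₁, hU₁, hmix₁⟩ := mix_convex_comb M₁ hT₁ hS₁ ha hb hab hx₁.2 hy₁.2
  obtain ⟨U₂, hU₂, hmix₂⟩ := mix_convex_comb M₂ hT₂ hS₂ ha hb hab hx₂.2 hy₂.2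
  refine ⟨convex_Icc 0 1 hx₁ hy₁ ha hb hab, convex_Icc 0 1 hx₂ hy₂ ha hb hab,
    U₁, U₂, hU₁, hU₂, ?_⟩
  simpa only [Prod.fst_add, Prod.snd_add, Prod.smul_fst, Prod.smul_snd, smul_eq_mul, hmix₁,
    hmix₂] using hx.convex_comb hy ha hb hab

/-- The joint measurability region `J(M₁,M₂)` is convex. -/
theorem jRegion_convex {n : ℕ} {J K : Type} [Countable J] [Countable K]
    (M₁ : J → Matrix (Fin n) (Fin n) ℂ) (M₂ : K → Matrix (Fin n) (Fin n) ℂ)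
    (hM₁ : IsPOVM M₁) (hM₂ : IsPOVM M₂) :
    Convex ℝ (JRegion M₁ M₂) :=
  jRegion_convex_general M₁ M₂
end

section
/- If two binary ±1-valued POVMs A and B on a Hilbert space H are jointly measurable, then for any state ρ on H⊗K and any binary POVMs N₁, N₂ on K, the CHSH expression |⟨A⊗N₁⟩ + ⟨A⊗N₂⟩ + ⟨B⊗N₁⟩ − ⟨B⊗N₂⟩| is at most 2. -/
open scoped ComplexOrder
open Kronecker

/-! A joint measurement `G` of `A` and `B` is a local hidden variable for the `H`-side: writing
`Â`, `B̂` as signed sums of the effects `G (a, b)`, the CHSH operator becomes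
`2 ∑_{a,b} G (a, b) ⊗ C (a, b)` with every `C (a, b) ∈ {±N̂₁, ±N̂₂}` between `-1` and `1`.
For `0 ≤ G` and `-1 ≤ C ≤ 1` the number `Tr[ρ (G ⊗ C)]` is bounded in modulus by
`Tr[ρ (G ⊗ 1)]`, and these bounds add up to `Tr ρ = 1`. -/

open scoped MatrixOrder

lemma Complex.norm_le_re_of_nonneg_sub_of_nonneg_add {s t : ℂ} (h₁ : 0 ≤ s - t) (h₂ : 0 ≤ s + t) :
    ‖t‖ ≤ s.re := by
  rw [Complex.nonneg_iff] at h₁ h₂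
  simp only [sub_re, sub_im, add_re, add_im] at h₁ h₂
  have ht : t = t.re := Complex.ext rfl (by simp only [ofReal_im]; linarith)
  rw [ht, Complex.norm_real, Real.norm_eq_abs]
  exact abs_le.2 ⟨by linarith, by linarith⟩

namespace Matrix

variable {ι κ : Type*} [Fintype ι] [Fintype κ]

lemma trace_mul_nonneg [DecidableEq ι] {ρ X : Matrix ι ι ℂ} (hρ : 0 ≤ ρ) (hX : 0 ≤ X) :
    0 ≤ (ρ * X).trace := by
  obtain ⟨C, rfl⟩ := CStarAlgebra.nonneg_iff_eq_star_mul_self.mp hρ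
  rw [Matrix.mul_assoc, trace_mul_comm]
  exact (nonneg_iff_posSemidef.mp (star_right_conjugate_nonneg hX C)).trace_nonneg

def correlation (ρ : Matrix (ι × κ) (ι × κ) ℂ) : Matrix ι ι ℂ →ₗ[ℂ] Matrix κ κ ℂ →ₗ[ℂ] ℂ :=
  kroneckerBilinear.compr₂ (traceLinearMap (ι × κ) ℂ ℂ ∘ₗ LinearMap.mulLeft ℂ ρ)

lemma correlation_apply (ρ : Matrix (ι × κ) (ι × κ) ℂ) (X : Matrix ι ι ℂ) (Y : Matrix κ κ ℂ) :
    correlation ρ X Y = (ρ * (X ⊗ₖ Y)).trace :=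
  rfl

variable [DecidableEq ι] [DecidableEq κ] {ρ : Matrix (ι × κ) (ι × κ) ℂ}

lemma correlation_nonneg (hρ : 0 ≤ ρ) {X : Matrix ι ι ℂ} {Y : Matrix κ κ ℂ} (hX : 0 ≤ X)
    (hY : 0 ≤ Y) : 0 ≤ correlation ρ X Y :=
  trace_mul_nonneg hρ ((nonneg_iff_posSemidef.1 hX).kronecker (nonneg_iff_posSemidef.1 hY)).nonneg

lemma norm_correlation_le (hρ : 0 ≤ ρ) {G : Matrix ι ι ℂ} (hG : 0 ≤ G) {C : Matrix κ κ ℂ}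
    (hC : C ∈ Set.Icc (-1) 1) : ‖correlation ρ G C‖ ≤ (correlation ρ G 1).re := by
  apply Complex.norm_le_re_of_nonneg_sub_of_nonneg_add
  · simpa only [map_sub] using correlation_nonneg hρ hG (sub_nonneg.2 hC.2)
  · simpa only [map_add, add_comm] using correlation_nonneg hρ hG (neg_le_iff_add_nonneg.1 hC.1)

theorem norm_sum_correlation_le_one {J : Type*} [Fintype J] (hρ : 0 ≤ ρ) (hρtr : ρ.trace = 1)
    {G : J → Matrix ι ι ℂ} (hG : ∀ j, 0 ≤ G j) (hGsum : ∑ j, G j = 1)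
    {C : J → Matrix κ κ ℂ} (hC : ∀ j, C j ∈ Set.Icc (-1) 1) :
    ‖∑ j, correlation ρ (G j) (C j)‖ ≤ 1 :=
  calc ‖∑ j, correlation ρ (G j) (C j)‖
      ≤ ∑ j, (correlation ρ (G j) 1).re :=
        (norm_sum_le _ _).trans <| Finset.sum_le_sum fun j _ ↦
          norm_correlation_le hρ (hG j) (hC j)
    _ = 1 := by
        rw [← Complex.re_sum, ← LinearMap.sum_apply, ← map_sum, hGsum, correlation_apply,
          one_kronecker_one, Matrix.mul_one, hρtr, Complex.one_re]

end Matrix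

lemma IsPOVM.sub_mem_Icc {n : ℕ} {N : Bool → Matrix (Fin n) (Fin n) ℂ} (hN : IsPOVM N) :
    N true - N false ∈ Set.Icc (-1) 1 := by
  obtain ⟨hpos, hsum⟩ := hN
  rw [tsum_bool] at hsum
  have h₀ : 0 ≤ N false := (hpos false).nonneg
  have h₁ : 0 ≤ N true := (hpos true).nonneg
  have hf : N true - N false = 1 - (N false + N false) := by rw [← hsum]; abel
  have ht : N true - N false = N true + N true - 1 := by rw [← hsum]; abel
  exact ⟨ht ▸ by simpa using add_nonneg h₁ h₁, hf ▸ sub_le_self _ (add_nonneg h₀ h₀)⟩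

theorem jointly_measurable_implies_chsh_general {n m : ℕ}
    (A B : Bool → Matrix (Fin n) (Fin n) ℂ)
    (N₁ N₂ : Bool → Matrix (Fin m) (Fin m) ℂ) (hN₁ : IsPOVM N₁) (hN₂ : IsPOVM N₂)
    (hJM : JointlyMeasurable A B)
    (ρ : Matrix (Fin n × Fin m) (Fin n × Fin m) ℂ)
    (hρ : ρ.PosSemidef) (hρtr : ρ.trace = 1) :
    ‖((ρ * ((A true - A false) ⊗ₖ (N₁ true - N₁ false))).trace
          + (ρ * ((A true - A false) ⊗ₖ (N₂ true - N₂ false))).trace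
          + (ρ * ((B true - B false) ⊗ₖ (N₁ true - N₁ false))).trace
          - (ρ * ((B true - B false) ⊗ₖ (N₂ true - N₂ false))).trace)‖ ≤ 2 := by
  obtain ⟨G, ⟨hGpos, hGsum⟩, hGA, hGB⟩ := hJM
  set D₁ := N₁ true - N₁ false
  set D₂ := N₂ true - N₂ false
  have hA : A true - A false =
      G (true, true) + G (true, false) - G (false, true) - G (false, false) := by
    rw [← hGA, ← hGA, tsum_bool, tsum_bool]; abel
  have hB : B true - B false =
      G (true, true) - G (true, false) + G (false, true) - G (false, false) := by
    rw [← hGB, ← hGB, tsum_bool, tsum_bool]; abel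
  -- `C (a, b) = (a (N̂₁ + N̂₂) + b (N̂₁ - N̂₂)) / 2` for signs `a, b = ±1`
  let C : Bool × Bool → Matrix (Fin m) (Fin m) ℂ
    | (true, true) => D₁ | (true, false) => D₂ | (false, true) => -D₂ | (false, false) => -D₁
  have hC : ∀ ab, C ab ∈ Set.Icc (-1) 1 := by
    rintro ⟨_ | _, _ | _⟩
    · exact Set.neg_mem_Icc_iff.2 (by rw [neg_neg]; exact hN₁.sub_mem_Icc)
    · exact Set.neg_mem_Icc_iff.2 (by rw [neg_neg]; exact hN₂.sub_mem_Icc)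
    · exact hN₂.sub_mem_Icc
    · exact hN₁.sub_mem_Icc
  have hCHSH : (ρ * ((A true - A false) ⊗ₖ D₁)).trace + (ρ * ((A true - A false) ⊗ₖ D₂)).trace
      + (ρ * ((B true - B false) ⊗ₖ D₁)).trace - (ρ * ((B true - B false) ⊗ₖ D₂)).trace
      = 2 * ∑ ab, Matrix.correlation ρ (G ab) (C ab) := by
    simp only [← Matrix.correlation_apply, hA, hB, map_add, map_sub, map_neg, LinearMap.add_apply,
      LinearMap.sub_apply, Fintype.sum_prod_type, Fintype.sum_bool, C]
    ring
  have hbound := Matrix.norm_sum_correlation_le_one hρ.nonneg hρtr (fun ab ↦ (hGpos ab).nonneg)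
    (by rwa [tsum_fintype] at hGsum) hC
  rw [hCHSH, norm_mul, Complex.norm_ofNat]
  linarith

/-- Jointly measurable binary observables on one side cannot violate the
Bell-CHSH inequality: the CHSH expression is bounded by 2 in every state and for all
binary observables on the other side. -/
theorem jointly_measurable_implies_chsh {n m : ℕ}
    (A B : Bool → Matrix (Fin n) (Fin n) ℂ) (hA : IsPOVM A) (hB : IsPOVM B)
    (N₁ N₂ : Bool → Matrix (Fin m) (Fin m) ℂ) (hN₁ : IsPOVM N₁) (hN₂ : IsPOVM N₂)
    (hJM : JointlyMeasurable A B)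
    (ρ : Matrix (Fin n × Fin m) (Fin n × Fin m) ℂ)
    (hρ : ρ.PosSemidef) (hρtr : ρ.trace = 1) :
    ‖((ρ * ((A true - A false) ⊗ₖ (N₁ true - N₁ false))).trace
          + (ρ * ((A true - A false) ⊗ₖ (N₂ true - N₂ false))).trace
          + (ρ * ((B true - B false) ⊗ₖ (N₁ true - N₁ false))).trace
          - (ρ * ((B true - B false) ⊗ₖ (N₂ true - N₂ false))).trace)‖ ≤ 2 :=
  jointly_measurable_implies_chsh_general A B N₁ N₂ hN₁ hN₂ hJM ρ hρ hρtr
end
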